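/- arXiv:2211.03121 — 5 statements merged into one kernel-verified Lean document; each statement's English description precedes it below -/
import Mathlib

section
/- Lower semicontinuity of the non-centered maximal operator under weak convergence: let μ be a Borel measure on a metric space X with all closed balls of finite measure, and let ν_n be finite Borel measures converging weakly to a finite Borel measure ν. Then for every x in the support of μ, liminf_{n→∞} M_μ ν_n(x) ≥ M_μ ν(x), where M_μ ν(x) = sup_{closed balls B ∋ x} ν(B)/μ(B) (with the convention 0 when μ(B)=0). -/
open MeasureTheory Metric ENNReal Filter

/-- A set is a (nondegenerate) closed ball. -/
def IsClosedBall {X : Type*} [MetricSpace X] (B : Set X) : Prop :=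
  ∃ (c : X) (r : ℝ), 0 < r ∧ B = Metric.closedBall c r

/-- The support of a measure: points all of whose neighborhoods have positive measure. -/
def suppM {X : Type*} [MetricSpace X] [MeasurableSpace X] (μ : Measure X) : Set X :=
  {x | ∀ r > (0 : ℝ), 0 < μ (Metric.ball x r)}

/-- Average of `f` over a set, declared `0` when the set is `μ`-null. -/
noncomputable def avg {X : Type*} [MetricSpace X] [MeasurableSpace X]
    (μ : Measure X) (f : X → ℝ≥0∞) (B : Set X) : ℝ≥0∞ :=
  if μ B = 0 then 0 else (∫⁻ y in B, f y ∂μ) / μ B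

/-- Centered Hardy–Littlewood maximal function. -/
noncomputable def Mc {X : Type*} [MetricSpace X] [MeasurableSpace X]
    (μ : Measure X) (f : X → ℝ≥0∞) (x : X) : ℝ≥0∞ :=
  ⨆ r > (0 : ℝ), avg μ f (Metric.closedBall x r)

/-- Non-centered Hardy–Littlewood maximal function. -/
noncomputable def Munc {X : Type*} [MetricSpace X] [MeasurableSpace X]
    (μ : Measure X) (f : X → ℝ≥0∞) (x : X) : ℝ≥0∞ :=
  ⨆ B ∈ {B : Set X | IsClosedBall B ∧ x ∈ B}, avg μ f B

/-- Ratio of measures with the convention `0` when the denominator vanishes. -/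
noncomputable def ratio0 {X : Type*} [MeasurableSpace X] (μ ν : MeasureTheory.Measure X) (B : Set X) : ℝ≥0∞ :=
  if μ B = 0 then 0 else ν B / μ B

/-- Centered maximal function of a measure `ν` with respect to `μ`. -/
noncomputable def McMeas {X : Type*} [MetricSpace X] [MeasurableSpace X]
    (μ ν : Measure X) (x : X) : ℝ≥0∞ :=
  ⨆ r > (0 : ℝ), ratio0 μ ν (Metric.closedBall x r)

/-- Non-centered maximal function of a measure `ν` with respect to `μ`. -/
noncomputable def MuncMeas {X : Type*} [MetricSpace X] [MeasurableSpace X]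
    (μ ν : Measure X) (x : X) : ℝ≥0∞ :=
  ⨆ B ∈ {B : Set X | IsClosedBall B ∧ x ∈ B}, ratio0 μ ν B

/-! Let `B = closedBall c r` contain `x` and let `s > r`. The thickened indicator of `B` is a
bounded continuous function equal to `1` on `B` and vanishing off `closedBall c s`, so weak
convergence gives `ν B ≤ liminf νₙ (closedBall c s)`; since `closedBall c s` also contains `x`,
this yields `ν B / μ (closedBall c s) ≤ liminf M_μ νₙ x`. As `s ↓ r`, continuity from above of
`μ` on balls of finite measure turns the left side into `ν B / μ B`. -/

open scoped Topology

namespace MeasureTheory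

theorem FiniteMeasure.measure_le_liminf_measure_thickening {Ω ι : Type*} [MeasurableSpace Ω]
    [PseudoEMetricSpace Ω] [OpensMeasurableSpace Ω] {L : Filter ι} [L.NeBot]
    {μ : FiniteMeasure Ω} {μs : ι → FiniteMeasure Ω} (hμs : Tendsto μs L (𝓝 μ))
    (E : Set Ω) {δ : ℝ} (hδ : 0 < δ) :
    (μ : Measure Ω) E ≤ L.liminf fun i ↦ (μs i : Measure Ω) (thickening δ E) := by
  set g := thickenedIndicator hδ E
  have hg_meas : Measurable fun x ↦ (g x : ℝ≥0∞) :=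
    measurable_coe_nnreal_ennreal.comp g.continuous.measurable
  have hg_le : ∀ x, (g x : ℝ≥0∞) ≤ (thickening δ E).indicator 1 x := by
    intro x
    by_cases hx : x ∈ thickening δ E
    · rw [Set.indicator_of_mem hx, Pi.one_apply]
      exact_mod_cast thickenedIndicator_le_one hδ E x
    · rw [Set.indicator_of_notMem hx, thickenedIndicator_zero hδ E hx, ENNReal.coe_zero]
  calc (μ : Measure Ω) E ≤ ∫⁻ x, g x ∂(μ : Measure Ω) :=
        meas_le_lintegral₀ hg_meas.aemeasurable fun x hx ↦ by
          exact_mod_cast one_le_thickenedIndicator_apply Ω hδ hx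
    _ = L.liminf fun i ↦ ∫⁻ x, g x ∂(μs i : Measure Ω) :=
        ((FiniteMeasure.tendsto_iff_forall_lintegral_tendsto.mp hμs) g).liminf_eq.symm
    _ ≤ L.liminf fun i ↦ (μs i : Measure Ω) (thickening δ E) := by
        refine liminf_le_liminf (.of_forall fun i ↦ ?_)
        calc ∫⁻ x, g x ∂(μs i : Measure Ω)
            ≤ ∫⁻ x, (thickening δ E).indicator 1 x ∂(μs i : Measure Ω) := lintegral_mono hg_le
          _ = _ := lintegral_indicator_one isOpen_thickening.measurableSet

end MeasureTheory

theorem Metric.thickening_closedBall_subset_ball {α : Type*} [PseudoMetricSpace α] (c : α)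
    (r δ : ℝ) : thickening δ (closedBall c r) ⊆ ball c (r + δ) := by
  rw [thickening_eq_biUnion_ball]
  simp only [Set.subset_def, Set.mem_iUnion, mem_ball, mem_closedBall]
  rintro x ⟨y, hy, hxy⟩
  linarith [dist_triangle x y c]

section MaximalFunction

variable {X : Type*} [MetricSpace X] [MeasurableSpace X]

theorem ratio0_le_muncMeas (μ ν : Measure X) {B : Set X} {x : X} (hB : IsClosedBall B)
    (hxB : x ∈ B) : ratio0 μ ν B ≤ MuncMeas μ ν x :=
  le_iSup₂_of_le (f := fun B _ ↦ ratio0 μ ν B) B ⟨hB, hxB⟩ le_rfl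

theorem liminf_measure_closedBall_div_le_liminf_muncMeas {ι : Type*} {L : Filter ι} [L.NeBot]
    (μ : Measure X) (νs : ι → Measure X) {c x : X} {s : ℝ} (hs : 0 < s)
    (hx : x ∈ closedBall c s) (hμ : μ (closedBall c s) ≠ 0) :
    L.liminf (fun i ↦ νs i (closedBall c s)) / μ (closedBall c s)
      ≤ L.liminf fun i ↦ MuncMeas μ (νs i) x := by
  simp only [div_eq_mul_inv]
  rw [mul_comm, ← liminf_mul_const_of_ne_top (ENNReal.inv_ne_top.2 hμ)]
  refine liminf_le_liminf (.of_forall fun i ↦ ?_)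
  have := ratio0_le_muncMeas μ (νs i) ⟨c, s, hs, rfl⟩ hx
  rwa [ratio0, if_neg hμ, div_eq_mul_inv] at this

theorem ratio0_closedBall_le_of_forall_gt [OpensMeasurableSpace X] {μ ν : Measure X} {c : X}
    {r : ℝ} {a : ℝ≥0∞} (hfin : ∃ s > r, μ (closedBall c s) ≠ ∞)
    (h : ∀ s > r, μ (closedBall c s) ≠ 0 → ν (closedBall c r) / μ (closedBall c s) ≤ a) :
    ratio0 μ ν (closedBall c r) ≤ a := by
  rw [ratio0]
  split_ifs with hr
  · exact zero_le
  have hlim : Tendsto (fun s ↦ μ (closedBall c s)) (𝓝[>] r) (𝓝 (μ (closedBall c r))) := by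
    simpa only [biInter_gt_closedBall, Function.comp_def] using tendsto_measure_biInter_gt
      (fun s _ ↦ measurableSet_closedBall.nullMeasurableSet)
      (fun _ _ _ hij ↦ closedBall_subset_closedBall hij) hfin
  obtain ⟨s₀, hs₀, hs₀_fin⟩ := hfin
  have hr_fin : μ (closedBall c r) ≠ ∞ :=
    ne_top_of_le_ne_top hs₀_fin (measure_mono (closedBall_subset_closedBall hs₀.le))
  refine le_of_tendsto (ENNReal.Tendsto.const_div hlim (Or.inl hr_fin)) ?_
  filter_upwards [self_mem_nhdsWithin] with s hs
  exact h s hs fun h0 ↦ hr (measure_mono_null (closedBall_subset_closedBall hs.le) h0)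

end MaximalFunction

theorem liminf_uncentered_maximal_general {X : Type*} [MetricSpace X] [MeasurableSpace X] [BorelSpace X]
    (μ : Measure X) (hfin : ∀ (c : X) (r : ℝ), μ (closedBall c r) ≠ ∞)
    (ν : ℕ → Measure X) (νlim : Measure X)
    [∀ n, IsFiniteMeasure (ν n)] [IsFiniteMeasure νlim]
    (hweak : ∀ g : BoundedContinuousFunction X ℝ,
      Tendsto (fun n => ∫ z, g z ∂(ν n)) atTop (nhds (∫ z, g z ∂νlim)))
    (x : X) :
    MuncMeas μ νlim x ≤ liminf (fun n => MuncMeas μ (ν n) x) atTop := by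
  have hconv := (FiniteMeasure.tendsto_iff_forall_integral_tendsto
    (μs := fun n ↦ ⟨ν n, inferInstance⟩) (μ := ⟨νlim, inferInstance⟩)).mpr hweak
  refine iSup₂_le ?_
  rintro _ ⟨⟨c, r, hr, rfl⟩, hxB⟩
  refine ratio0_closedBall_le_of_forall_gt ⟨r + 1, by linarith, hfin c _⟩ fun s hs hμs ↦ ?_
  have hball : thickening (s - r) (closedBall c r) ⊆ closedBall c s := by
    simpa only [add_sub_cancel] using
      (thickening_closedBall_subset_ball c r (s - r)).trans ball_subset_closedBall
  calc νlim (closedBall c r) / μ (closedBall c s)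
      ≤ liminf (fun n ↦ ν n (closedBall c s)) atTop / μ (closedBall c s) := by
        gcongr
        exact (FiniteMeasure.measure_le_liminf_measure_thickening hconv _ (sub_pos.2 hs)).trans
          (liminf_le_liminf (.of_forall fun n ↦ measure_mono hball))
    _ ≤ liminf (fun n ↦ MuncMeas μ (ν n) x) atTop :=
        liminf_measure_closedBall_div_le_liminf_muncMeas μ ν (hr.trans hs)
          (closedBall_subset_closedBall hs.le hxB) hμs

/-- Lower semicontinuity of the non-centered maximal operator under weak convergence. -/
theorem liminf_uncentered_maximal {X : Type*} [MetricSpace X] [MeasurableSpace X] [BorelSpace X]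
    (μ : Measure X) (hfin : ∀ (c : X) (r : ℝ), μ (closedBall c r) ≠ ∞)
    (hsupp : (suppM μ).Nonempty)
    (ν : ℕ → Measure X) (νlim : Measure X)
    [∀ n, IsFiniteMeasure (ν n)] [IsFiniteMeasure νlim]
    (hweak : ∀ g : BoundedContinuousFunction X ℝ,
      Tendsto (fun n => ∫ z, g z ∂(ν n)) atTop (nhds (∫ z, g z ∂νlim)))
    (x : X) (hx : x ∈ suppM μ) :
    MuncMeas μ νlim x ≤ liminf (fun n => MuncMeas μ (ν n) x) atTop :=
  liminf_uncentered_maximal_general μ hfin ν νlim hweak x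
end

section
/- A metric space (X,d) is ultrametric if and only if for every discrete (purely atomic, countably supported, finite on closed balls) Borel measure μ on X, the centered and non-centered Hardy–Littlewood maximal operators with respect to μ coincide on L^1(μ) at every point of the support of μ. -/
open MeasureTheory Metric ENNReal Filter

section Ultrametric

variable {X : Type*} [MetricSpace X] [MeasurableSpace X]

lemma Mc_le_Munc (μ : Measure X) (f : X → ℝ≥0∞) (x : X) : Mc μ f x ≤ Munc μ f x :=
  iSup₂_le fun r hr ↦ le_iSup₂_of_le (closedBall x r)
    ⟨⟨x, r, hr, rfl⟩, mem_closedBall_self hr.le⟩ le_rfl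

lemma Munc_le_Mc [IsUltrametricDist X] (μ : Measure X) (f : X → ℝ≥0∞) (x : X) :
    Munc μ f x ≤ Mc μ f x := by
  refine iSup₂_le ?_
  rintro _ ⟨⟨c, r, hr, rfl⟩, hx⟩
  rw [IsUltrametricDist.closedBall_eq_of_mem hx]
  exact le_iSup₂_of_le r hr le_rfl

lemma Mc_eq_Munc [IsUltrametricDist X] (μ : Measure X) (f : X → ℝ≥0∞) (x : X) :
    Mc μ f x = Munc μ f x :=
  (Mc_le_Munc μ f x).antisymm (Munc_le_Mc μ f x)

end Ultrametric

lemma exists_dist_le_of_not_ultrametric {X : Type*} [PseudoMetricSpace X]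
    (h : ¬ ∀ a b c : X, dist a c ≤ max (dist a b) (dist b c)) :
    ∃ a b c : X, dist a b ≤ dist b c ∧ max (dist a b) (dist b c) < dist a c := by
  push Not at h
  obtain ⟨a, b, c, habc⟩ := h
  rcases le_total (dist a b) (dist b c) with hle | hle
  · exact ⟨a, b, c, hle, habc⟩
  · refine ⟨c, b, a, ?_, ?_⟩ <;> rw [dist_comm c b, dist_comm b a]
    · exact hle
    · rwa [max_comm, dist_comm c a]

lemma Measure.exists_sum_smul_dirac_nat_eq {X ι : Type*} [MeasurableSpace X] [Countable ι]
    [Nonempty ι] (w : ι → ℝ≥0∞) (p : ι → X) :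
    ∃ (w' : ℕ → ℝ≥0∞) (p' : ℕ → X),
      Measure.sum (fun i ↦ w i • Measure.dirac (p i)) =
        Measure.sum (fun n ↦ w' n • Measure.dirac (p' n)) := by
  obtain ⟨e, he⟩ := exists_injective_nat ι
  obtain ⟨i₀⟩ := ‹Nonempty ι›
  refine ⟨Function.extend e w 0, Function.extend e p fun _ ↦ p i₀, ?_⟩
  rw [← Measure.sum_extend_zero he]
  congr 1
  funext n
  by_cases hn : ∃ i, e i = n
  · obtain ⟨i, rfl⟩ := hn
    simp only [he.extend_apply]
  · simp only [Function.extend_apply' _ _ _ hn, Pi.zero_apply, zero_smul]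

lemma mem_suppM_of_measure_singleton_pos {X : Type*} [MetricSpace X] [MeasurableSpace X]
    {μ : Measure X} {x : X} (hx : 0 < μ {x}) : x ∈ suppM μ := fun _ hr ↦
  hx.trans_le (measure_mono (Set.singleton_subset_iff.mpr (mem_ball_self hr)))

lemma avg_indicator_one {X : Type*} [MetricSpace X] [MeasurableSpace X] (μ : Measure X)
    {s : Set X} (hs : MeasurableSet s) (B : Set X) :
    avg μ (s.indicator 1) B = if μ B = 0 then 0 else μ (s ∩ B) / μ B := by
  rw [avg, lintegral_indicator_one hs, Measure.restrict_apply hs]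

section ThreePoints

variable {X : Type*} [MetricSpace X] [MeasurableSpace X] [BorelSpace X] {a b c : X}

lemma Mc_indicator_le_inv_three (hab : dist a b ≤ dist b c) (hac : a ≠ c) (hbc : b ≠ c) :
    Mc (Measure.dirac a + Measure.dirac b + Measure.dirac c) (Set.indicator {c} 1) b
      ≤ 3⁻¹ := by
  refine iSup₂_le fun r hr ↦ ?_
  rw [avg_indicator_one _ (measurableSet_singleton c)]
  split_ifs with h0
  · exact zero_le
  by_cases hc : c ∈ closedBall b r
  · have ha : a ∈ closedBall b r := hab.trans ((dist_comm b c).trans_le hc)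
    have hb : b ∈ closedBall b r := mem_closedBall_self hr.le
    norm_num [ha, hb, hc, hac, hbc]
  · simp [hc]

lemma inv_two_le_Munc_indicator (h : max (dist a b) (dist b c) < dist a c) (hac : a ≠ c)
    (hbc : b ≠ c) :
    2⁻¹ ≤
      Munc (Measure.dirac a + Measure.dirac b + Measure.dirac c) (Set.indicator {c} 1) b := by
  have ha : a ∉ closedBall c (dist b c) := by
    simpa [mem_closedBall] using (le_max_right _ _).trans_lt h
  have hb : b ∈ closedBall c (dist b c) := mem_closedBall.mpr le_rfl
  have hc : c ∈ closedBall c (dist b c) := mem_closedBall_self dist_nonneg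
  refine le_iSup₂_of_le (closedBall c (dist b c)) ⟨⟨c, _, dist_pos.mpr hbc, rfl⟩, hb⟩ ?_
  rw [avg_indicator_one _ (measurableSet_singleton c)]
  norm_num [ha, hb, hc, hac, hbc]

lemma Mc_lt_Munc_indicator (hab : dist a b ≤ dist b c)
    (h : max (dist a b) (dist b c) < dist a c) :
    Mc (Measure.dirac a + Measure.dirac b + Measure.dirac c) (Set.indicator {c} 1) b <
      Munc (Measure.dirac a + Measure.dirac b + Measure.dirac c) (Set.indicator {c} 1) b := by
  have hac : a ≠ c := dist_pos.mp ((dist_nonneg.trans (le_max_left _ _)).trans_lt h)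
  have hbc : b ≠ c := by rintro rfl; simp at h
  calc _ ≤ 3⁻¹ := Mc_indicator_le_inv_three hab hac hbc
    _ < 2⁻¹ := by norm_num
    _ ≤ _ := inv_two_le_Munc_indicator h hac hbc

end ThreePoints

/-- A metric space is ultrametric iff for every discrete measure the centered and
non-centered maximal operators coincide on `L¹` at every support point. -/
theorem ultrametric_iff_maximal_eq_discrete {X : Type*} [MetricSpace X] [MeasurableSpace X]
    [BorelSpace X] :
    (∀ a b c : X, dist a c ≤ max (dist a b) (dist b c)) ↔
      (∀ μ : Measure X,
        (∃ (w : ℕ → ℝ≥0∞) (p : ℕ → X),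
          μ = Measure.sum (fun n => w n • Measure.dirac (p n))) →
        (∀ (c : X) (r : ℝ), μ (closedBall c r) ≠ ∞) →
        ∀ f : X → ℝ≥0∞, Measurable f → (∫⁻ z, f z ∂μ) ≠ ∞ →
        ∀ z ∈ suppM μ, Mc μ f z = Munc μ f z) := by
  refine ⟨fun H μ _ _ f _ _ z _ ↦ ?_, fun H ↦ ?_⟩
  · have : IsUltrametricDist X := ⟨H⟩
    exact Mc_eq_Munc μ f z
  by_contra hX
  obtain ⟨a, b, c, hab, habc⟩ := exists_dist_le_of_not_ultrametric hX
  set μ := Measure.dirac a + Measure.dirac b + Measure.dirac c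
  have hμ : ∃ (w : ℕ → ℝ≥0∞) (p : ℕ → X),
      μ = Measure.sum (fun n => w n • Measure.dirac (p n)) := by
    simpa [μ, Fin.sum_univ_three, add_assoc] using
      Measure.exists_sum_smul_dirac_nat_eq (fun _ ↦ (1 : ℝ≥0∞)) ![a, b, c]
  have hb : b ∈ suppM μ := mem_suppM_of_measure_singleton_pos (by simp [μ])
  have hf : Measurable (Set.indicator {c} (1 : X → ℝ≥0∞)) :=
    measurable_one.indicator (measurableSet_singleton c)
  refine (Mc_lt_Munc_indicator hab habc).ne
    (H μ hμ (fun _ _ ↦ measure_ne_top μ _) _ hf ?_ b hb)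
  rw [lintegral_indicator_one (measurableSet_singleton c)]
  exact measure_ne_top μ _
end

section
/- Let μ be a continuous (atomless) Borel measure on a metric space X, finite on closed balls, such that M^c_μ f = M_μ f on supp(μ) for all f ∈ L^1_loc(μ). Then there is no sequence {x_n}_{n≥1} ⊆ supp(μ) such that each x_{n+2} is a metric midpoint of x_n and x_{n+1} (i.e., d(x_n, x_{n+2}) = d(x_{n+1}, x_{n+2}) = d(x_n, x_{n+1})/2, with all x_n distinct) and x_n converges to some x_0 ∈ supp(μ). -/
open MeasureTheory Metric ENNReal Filter

/-!
Testing `Mc μ f p = Munc μ f p` on the indicator `f` of a set `A` of positive measure compares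
the non-centered average over a ball `closedBall c s ⊇ A ∪ {p}` with the centered averages at `p`,
which vanish below the distance `ρ` from `p` to `A`. This gives
`μ (closedBall p ρ) ≤ μ (closedBall c s)`.

Along a midpoint sequence converging to `x₀`, `dist (x n) x₀ = 2 / 3 * D / 2 ^ n` with
`D = dist (x 0) (x 1)`. Two tests, at `x 2` and at `x 0`, show that near `x 0` the measure lives in
`ball (x 2) (D / 2)`: otherwise the open annulus about `x 0` containing `x₀` would be null. Tests at
`x₀` and at `x 2` then show that the annulus `ball x₀ (2 / 3 * D) \ closedBall x₀ (D / 3)` is null.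
But a small ball about the support point `x 0` lies almost entirely in that annulus.
-/

open Set Topology

section

variable {X : Type*} [MetricSpace X]

section Measure

variable [MeasurableSpace X] {μ : Measure X}

theorem measure_pos_of_mem_suppM {p : X} (hp : p ∈ suppM μ) {U : Set X} (hU : U ∈ 𝓝 p) :
    0 < μ U := by
  obtain ⟨r, hr, hrU⟩ := Metric.mem_nhds_iff.1 hU
  exact (hp r hr).trans_le (measure_mono hrU)

theorem tendsto_measure_inter_closedBall_sub (A : Set X) (z : X) (a : ℝ) :
    Tendsto (fun ε => μ (A ∩ closedBall z (a - ε))) (𝓝[>] 0) (𝓝 (μ (A ∩ ball z a))) := by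
  have : (atBot : Filter (Ioi (0 : ℝ))).IsCountablyGenerated := by
    rw [← comap_coe_Ioi_nhdsGT]
    infer_instance
  have hunion : ⋃ ε : Ioi (0 : ℝ), A ∩ closedBall z (a - ε) = A ∩ ball z a := by
    ext y
    simp only [mem_iUnion, mem_inter_iff, mem_closedBall, mem_ball, Subtype.exists, mem_Ioi]
    constructor
    · rintro ⟨ε, hε, hyA, hy⟩
      exact ⟨hyA, by linarith⟩
    · rintro ⟨hyA, hy⟩
      exact ⟨a - dist y z, by linarith, hyA, by linarith⟩
  rw [← map_coe_Ioi_atBot, tendsto_map'_iff, ← hunion]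
  exact tendsto_measure_iUnion_atBot fun ε δ hεδ => inter_subset_inter_right _
    (closedBall_subset_closedBall (by have : (ε : ℝ) ≤ δ := hεδ; linarith))

theorem tendsto_measure_closedBall_add [OpensMeasurableSpace X] (w : X) {b : ℝ}
    (hw : ∃ ε > 0, μ (closedBall w (b + ε)) ≠ ∞) :
    Tendsto (fun ε => μ (closedBall w (b + ε))) (𝓝[>] 0) (𝓝 (μ (closedBall w b))) := by
  have hinter : ⋂ ε > (0 : ℝ), closedBall w (b + ε) = closedBall w b := by
    ext y
    simp only [mem_iInter, mem_closedBall]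
    refine ⟨fun h => le_of_forall_pos_le_add fun ε hε => h ε hε, fun h ε hε => by linarith⟩
  rw [← hinter]
  exact tendsto_measure_biInter_gt (fun _ _ => measurableSet_closedBall.nullMeasurableSet)
    (fun ε δ _ hεδ => closedBall_subset_closedBall (by linarith)) hw

theorem measure_ball_le_of_eventually_le [OpensMeasurableSpace X] {z w : X} {a b : ℝ}
    (hw : ∃ ε > 0, μ (closedBall w (b + ε)) ≠ ∞)
    (h : ∀ᶠ ε in 𝓝[>] 0, μ (closedBall z (a - ε)) ≤ μ (closedBall w (b + ε))) :
    μ (ball z a) ≤ μ (closedBall w b) := by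
  have hz := tendsto_measure_inter_closedBall_sub (μ := μ) univ z a
  simp only [univ_inter] at hz
  exact le_of_tendsto_of_tendsto hz (tendsto_measure_closedBall_add w hw) h

theorem eventually_measure_inter_closedBall_sub_pos {A : Set X} {c : X} {r : ℝ}
    (h : 0 < μ (A ∩ ball c r)) : ∀ᶠ η in 𝓝[>] 0, 0 < μ (A ∩ closedBall c (r - η)) :=
  (tendsto_measure_inter_closedBall_sub A c r).eventually_const_lt h

end Measure

section Maximal

variable [MeasurableSpace X] {μ : Measure X}

theorem avg_indicator_one_s9 {A : Set X} (hA : MeasurableSet A) (B : Set X) :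
    avg μ (A.indicator 1) B = μ (A ∩ B) / μ B := by
  rw [avg, lintegral_indicator_one hA, Measure.restrict_apply hA]
  split_ifs with hB
  · rw [measure_mono_null inter_subset_right hB, ENNReal.zero_div]
  · rfl

theorem avg_closedBall_le_Munc (f : X → ℝ≥0∞) {p c : X} {s : ℝ} (hs : 0 < s)
    (hpc : p ∈ closedBall c s) : avg μ f (closedBall c s) ≤ Munc μ f p :=
  le_biSup (fun B => avg μ f B)
    (⟨⟨c, s, hs, rfl⟩, hpc⟩ : closedBall c s ∈ {B | IsClosedBall B ∧ p ∈ B})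

theorem Mc_indicator_one_le {A : Set X} (hA : MeasurableSet A) {p : X} {ρ : ℝ}
    (hAp : ∀ y ∈ A, ρ ≤ dist p y) : Mc μ (A.indicator 1) p ≤ μ A / μ (closedBall p ρ) := by
  refine iSup₂_le fun r _ => ?_
  rw [avg_indicator_one_s9 hA]
  rcases lt_or_ge r ρ with hr | hr
  · have hdisj : A ∩ closedBall p r = ∅ := by
      refine eq_empty_of_forall_notMem fun y ⟨hyA, hy⟩ => ?_
      have := hAp y hyA
      rw [mem_closedBall, dist_comm] at hy
      linarith
    simp [hdisj]
  · exact ENNReal.div_le_div (measure_mono inter_subset_left)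
      (measure_mono (closedBall_subset_closedBall hr))

end Maximal

def MaximalOperatorsAgree [MeasurableSpace X] (μ : Measure X) : Prop :=
  ∀ f : X → ℝ≥0∞, Measurable f → (∀ (c : X) (r : ℝ), (∫⁻ z in closedBall c r, f z ∂μ) ≠ ∞) →
    ∀ z ∈ suppM μ, Mc μ f z = Munc μ f z

namespace MaximalOperatorsAgree

variable [MeasurableSpace X] {μ : Measure X}

theorem measure_closedBall_le (hM : MaximalOperatorsAgree μ) {A : Set X} (hA : MeasurableSet A)
    (hA₀ : μ A ≠ 0) {p c : X} {ρ s : ℝ} (hs : 0 < s) (hcs : μ (closedBall c s) ≠ ∞)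
    (hp : p ∈ suppM μ) (hpc : p ∈ closedBall c s) (hAc : A ⊆ closedBall c s)
    (hAp : ∀ y ∈ A, ρ ≤ dist p y) : μ (closedBall p ρ) ≤ μ (closedBall c s) := by
  have hA_fin : μ A ≠ ∞ := ne_top_of_le_ne_top hcs (measure_mono hAc)
  have hf_int : ∀ (c' : X) (r' : ℝ), (∫⁻ z in closedBall c' r', A.indicator 1 z ∂μ) ≠ ∞ :=
    fun c' r' => by
      rw [lintegral_indicator_one hA, Measure.restrict_apply hA]
      exact ne_top_of_le_ne_top hA_fin (measure_mono inter_subset_left)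
  have key : μ A / μ (closedBall c s) ≤ μ A / μ (closedBall p ρ) := calc
    μ A / μ (closedBall c s) = avg μ (A.indicator 1) (closedBall c s) := by
      rw [avg_indicator_one_s9 hA, inter_eq_left.2 hAc]
    _ ≤ Munc μ (A.indicator 1) p := avg_closedBall_le_Munc _ hs hpc
    _ = Mc μ (A.indicator 1) p := (hM _ (measurable_one.indicator hA) hf_int p hp).symm
    _ ≤ μ A / μ (closedBall p ρ) := Mc_indicator_one_le hA hAp
  exact le_of_not_gt fun h => (ENNReal.div_lt_div_left hA₀ hA_fin h).not_ge key

theorem measure_closedBall_le_of_mem_suppM [OpensMeasurableSpace X]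
    (hM : MaximalOperatorsAgree μ) {p q c : X} {ρ s η : ℝ} (hη : 0 < η)
    (hcs : μ (closedBall c s) ≠ ∞) (hp : p ∈ suppM μ) (hq : q ∈ suppM μ)
    (hpc : dist p c ≤ s) (hqc : dist q c + η ≤ s) (hpq : ρ + η ≤ dist p q) :
    μ (closedBall p ρ) ≤ μ (closedBall c s) := by
  refine hM.measure_closedBall_le measurableSet_closedBall
    (measure_pos_of_mem_suppM hq (closedBall_mem_nhds q hη)).ne'
    (by linarith [dist_nonneg (x := q) (y := c)]) hcs hp hpc (fun y hy => ?_) fun y hy => ?_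
  · rw [mem_closedBall] at hy ⊢
    linarith [dist_triangle y q c]
  · rw [mem_closedBall] at hy
    linarith [dist_triangle p y q]

end MaximalOperatorsAgree

def IsMidpointSequence (x : ℕ → X) : Prop :=
  ∀ n, dist (x n) (x (n + 2)) = dist (x n) (x (n + 1)) / 2 ∧
    dist (x (n + 1)) (x (n + 2)) = dist (x n) (x (n + 1)) / 2

namespace IsMidpointSequence

variable {x : ℕ → X} {x₀ : X}

theorem dist_succ (hx : IsMidpointSequence x) (n : ℕ) :
    dist (x n) (x (n + 1)) = dist (x 0) (x 1) / 2 ^ n := by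
  induction n with
  | zero => simp
  | succ n ih => rw [(hx n).2, ih, pow_succ, div_div]

theorem dist_eq_of_tendsto (hx : IsMidpointSequence x) (hlim : Tendsto x atTop (𝓝 x₀)) (n : ℕ) :
    dist (x n) x₀ = 2 / 3 * dist (x n) (x (n + 1)) := by
  set f : ℕ → ℝ := fun m => dist (x m) x₀ - 2 / 3 * dist (x m) (x (m + 1))
  have hf : Tendsto f atTop (𝓝 0) := by
    have h := (hlim.dist (tendsto_const_nhds (x := x₀))).sub
      ((hlim.dist (hlim.comp (tendsto_add_atTop_nat 1))).const_mul (2 / 3))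
    simpa using h
  -- the triangle inequality through `x (m + 2)` makes `f` increase along steps of two
  have hstep : ∀ m, f m ≤ f (m + 2) := fun m => by
    have h₁ := dist_triangle (x m) (x (m + 2)) x₀
    have h₂ : dist (x (m + 2)) (x (m + 3)) = dist (x (m + 1)) (x (m + 2)) / 2 := (hx (m + 1)).2
    simp only [f]
    linarith [(hx m).1, (hx m).2]
  have hle : ∀ m, f m ≤ 0 := fun m => by
    have hmono : ∀ k, f m ≤ f (m + 2 * k) := fun k => by
      induction k with
      | zero => rfl
      | succ k ih => exact ih.trans (hstep _)
    exact ge_of_tendsto' (hf.comp (tendsto_atTop_mono (fun k => by simp only [id]; omega)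
      tendsto_id)) hmono
  have hlow := dist_triangle (x n) x₀ (x (n + 1))
  have hup₀ := hle n
  have hup₁ := hle (n + 1)
  simp only [f, (hx n).2, dist_comm x₀] at hup₀ hup₁ hlow ⊢
  linarith

theorem closedBall_subset_union (hx : IsMidpointSequence x) (hlim : Tendsto x atTop (𝓝 x₀))
    (h01 : x 0 ≠ x 1) :
    closedBall (x 0) (dist (x 0) (x 1) / 6) ⊆
      (closedBall (x 0) (dist (x 0) (x 1) / 2) \ ball (x 2) (dist (x 0) (x 1) / 2)) ∪
        (ball x₀ (2 / 3 * dist (x 0) (x 1)) \ closedBall x₀ (dist (x 0) (x 1) / 3)) := by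
  set D := dist (x 0) (x 1)
  have hD : 0 < D := dist_pos.2 h01
  have h0lim : dist (x 0) x₀ = 2 / 3 * D := hx.dist_eq_of_tendsto hlim 0
  have h2lim : dist (x 2) x₀ = D / 6 := by rw [hx.dist_eq_of_tendsto hlim, hx.dist_succ]; ring
  intro y hy
  rw [mem_closedBall] at hy
  by_cases hy₂ : y ∈ ball (x 2) (D / 2)
  · rw [mem_ball] at hy₂
    right
    simp only [Set.mem_sdiff, mem_ball, mem_closedBall, not_le]
    constructor
    · linarith [dist_triangle y (x 2) x₀]
    · linarith [dist_triangle (x 0) y x₀, dist_comm y (x 0)]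
  · exact Or.inl ⟨mem_closedBall.2 (by linarith [dist_nonneg (x := y) (y := x 0)]), hy₂⟩

variable [MeasurableSpace X] [OpensMeasurableSpace X] {μ : Measure X}

theorem measure_closedBall_sdiff_ball_eq_zero (hx : IsMidpointSequence x)
    (hlim : Tendsto x atTop (𝓝 x₀)) (hM : MaximalOperatorsAgree μ)
    (hfin : ∀ (c : X) (r : ℝ), μ (closedBall c r) ≠ ∞) (hxμ : ∀ n, x n ∈ suppM μ)
    (hx₀ : x₀ ∈ suppM μ) (h01 : x 0 ≠ x 1) :
    μ (closedBall (x 0) (dist (x 0) (x 1) / 2) \ ball (x 2) (dist (x 0) (x 1) / 2)) = 0 := by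
  set D := dist (x 0) (x 1)
  have hD : 0 < D := dist_pos.2 h01
  have h02 : dist (x 0) (x 2) = D / 2 := (hx 0).1
  have h12 : dist (x 1) (x 2) = D / 2 := (hx 0).2
  have h0lim : dist (x 0) x₀ = 2 / 3 * D := hx.dist_eq_of_tendsto hlim 0
  by_contra hA₀
  have hle₁ : μ (closedBall (x 2) (D / 2)) ≤ μ (closedBall (x 0) (D / 2)) :=
    hM.measure_closedBall_le (measurableSet_closedBall.diff measurableSet_ball) hA₀
      (by positivity) (hfin _ _) (hxμ 2) (by rw [mem_closedBall, dist_comm, h02]) sdiff_subset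
      fun y hy => by rw [dist_comm]; exact not_lt.1 hy.2
  have hle₂ : μ (ball (x 0) D) ≤ μ (closedBall (x 2) (D / 2)) := by
    refine measure_ball_le_of_eventually_le ⟨1, one_pos, hfin _ _⟩ ?_
    filter_upwards [self_mem_nhdsWithin] with ε (hε : 0 < ε)
    exact hM.measure_closedBall_le_of_mem_suppM hε (hfin _ _) (hxμ 0) (hxμ 1)
      (by linarith) (by linarith) (by linarith)
  have hpos : 0 < μ (ball (x 0) D \ closedBall (x 0) (D / 2)) := by
    refine measure_pos_of_mem_suppM hx₀ ((isOpen_ball.sdiff isClosed_closedBall).mem_nhds ?_)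
    simp only [Set.mem_sdiff, mem_ball, mem_closedBall, dist_comm x₀, h0lim, not_le]
    constructor <;> linarith
  rw [measure_sdiff (closedBall_subset_ball (by linarith))
    measurableSet_closedBall.nullMeasurableSet (hfin _ _)] at hpos
  exact hpos.ne' (tsub_eq_zero_of_le (hle₂.trans hle₁))

theorem measure_closedBall_le_of_inter_pos (hx : IsMidpointSequence x)
    (hlim : Tendsto x atTop (𝓝 x₀)) (hM : MaximalOperatorsAgree μ)
    (hfin : ∀ (c : X) (r : ℝ), μ (closedBall c r) ≠ ∞) (hxμ : ∀ n, x n ∈ suppM μ)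
    (hx₀ : x₀ ∈ suppM μ) {ε η : ℝ} (hη : 0 < η) (hηD : η ≤ dist (x 0) (x 1) / 3)
    (hpos : 0 < μ (closedBall (x 0) ε ∩ closedBall (x 2) (dist (x 0) (x 1) / 2 - η))) :
    μ (closedBall x₀ (2 / 3 * dist (x 0) (x 1) - ε)) ≤
      μ (closedBall x₀ (dist (x 0) (x 1) / 3 + η)) := by
  set D := dist (x 0) (x 1)
  have h12 : dist (x 1) (x 2) = D / 2 := (hx 0).2
  have h13 : dist (x 1) (x 3) = D / 4 := by rw [(hx 1).1, h12]; ring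
  have h23 : dist (x 2) (x 3) = D / 4 := by rw [hx.dist_succ]; ring
  have h0lim : dist (x 0) x₀ = 2 / 3 * D := hx.dist_eq_of_tendsto hlim 0
  have h2lim : dist (x 2) x₀ = D / 6 := by rw [hx.dist_eq_of_tendsto hlim, hx.dist_succ]; ring
  have h3lim : dist (x 3) x₀ = D / 12 := by rw [hx.dist_eq_of_tendsto hlim, hx.dist_succ]; ring
  calc μ (closedBall x₀ (2 / 3 * D - ε))
      ≤ μ (closedBall (x 2) (D / 2 - η)) := by
        refine hM.measure_closedBall_le (measurableSet_closedBall.inter measurableSet_closedBall)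
          hpos.ne' (by linarith) (hfin _ _) hx₀ ?_ inter_subset_right fun y hy => ?_
        · rw [mem_closedBall, dist_comm, h2lim]
          linarith
        · have hy₀ := mem_closedBall.1 hy.1
          linarith [dist_triangle x₀ y (x 0), dist_comm x₀ (x 0)]
    _ ≤ μ (closedBall (x 3) (D / 4 + η)) :=
        hM.measure_closedBall_le_of_mem_suppM hη (hfin _ _) (hxμ 2) (hxμ 1) (by linarith)
          (by linarith) (by rw [dist_comm, h12]; linarith)
    _ ≤ μ (closedBall x₀ (D / 3 + η)) :=
        measure_mono (closedBall_subset_closedBall' (by linarith))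

theorem measure_ball_sdiff_closedBall_eq_zero (hx : IsMidpointSequence x)
    (hlim : Tendsto x atTop (𝓝 x₀)) (hM : MaximalOperatorsAgree μ)
    (hfin : ∀ (c : X) (r : ℝ), μ (closedBall c r) ≠ ∞) (hxμ : ∀ n, x n ∈ suppM μ)
    (hx₀ : x₀ ∈ suppM μ) (h01 : x 0 ≠ x 1) :
    μ (ball x₀ (2 / 3 * dist (x 0) (x 1)) \ closedBall x₀ (dist (x 0) (x 1) / 3)) = 0 := by
  set D := dist (x 0) (x 1)
  have hD : 0 < D := dist_pos.2 h01
  have hle : μ (ball x₀ (2 / 3 * D)) ≤ μ (closedBall x₀ (D / 3)) := by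
    refine measure_ball_le_of_eventually_le ⟨1, one_pos, hfin _ _⟩ ?_
    filter_upwards [Ioo_mem_nhdsGT (show (0 : ℝ) < D / 3 by positivity)] with ε ⟨hε₀, hεD⟩
    have hbump : 0 < μ (closedBall (x 0) ε ∩ ball (x 2) (D / 2)) := by
      have hnull : μ (closedBall (x 0) ε \ ball (x 2) (D / 2)) = 0 :=
        measure_mono_null (sdiff_subset_sdiff_left (closedBall_subset_closedBall (by linarith)))
          (hx.measure_closedBall_sdiff_ball_eq_zero hlim hM hfin hxμ hx₀ h01)
      have := measure_le_inter_add_sdiff μ (closedBall (x 0) ε) (ball (x 2) (D / 2))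
      rw [hnull, add_zero] at this
      exact (measure_pos_of_mem_suppM (hxμ 0) (closedBall_mem_nhds _ hε₀)).trans_le this
    obtain ⟨η, hpos, hη₀, hηε⟩ := ((eventually_measure_inter_closedBall_sub_pos hbump).and
      (Ioo_mem_nhdsGT hε₀)).exists
    calc μ (closedBall x₀ (2 / 3 * D - ε))
        ≤ μ (closedBall x₀ (D / 3 + η)) :=
          hx.measure_closedBall_le_of_inter_pos hlim hM hfin hxμ hx₀ hη₀ (by linarith) hpos
      _ ≤ μ (closedBall x₀ (D / 3 + ε)) :=
          measure_mono (closedBall_subset_closedBall (by linarith))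
  rw [measure_sdiff (closedBall_subset_ball (by linarith))
    measurableSet_closedBall.nullMeasurableSet (hfin _ _)]
  exact tsub_eq_zero_of_le hle

end IsMidpointSequence

end

theorem no_midpoint_sequence_general {X : Type*} [MetricSpace X] [MeasurableSpace X] [BorelSpace X]
    (μ : Measure X) (hfin : ∀ (c : X) (r : ℝ), μ (closedBall c r) ≠ ∞)
    (hM : ∀ f : X → ℝ≥0∞, Measurable f →
      (∀ (c : X) (r : ℝ), (∫⁻ z in closedBall c r, f z ∂μ) ≠ ∞) →
      ∀ z ∈ suppM μ, Mc μ f z = Munc μ f z) :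
    ¬ ∃ x : ℕ → X,
      (∀ n, x n ∈ suppM μ) ∧
      Function.Injective x ∧
      (∀ n, dist (x n) (x (n + 2)) = dist (x n) (x (n + 1)) / 2 ∧
            dist (x (n + 1)) (x (n + 2)) = dist (x n) (x (n + 1)) / 2) ∧
      (∃ x0 ∈ suppM μ, Tendsto x atTop (nhds x0)) := by
  rintro ⟨x, hxμ, hinj, hmid, x₀, hx₀, hlim⟩
  have hx : IsMidpointSequence x := hmid
  have h01 : x 0 ≠ x 1 := hinj.ne zero_ne_one
  have hnull := measure_union_null
    (hx.measure_closedBall_sdiff_ball_eq_zero hlim hM hfin hxμ hx₀ h01)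
    (hx.measure_ball_sdiff_closedBall_eq_zero hlim hM hfin hxμ hx₀ h01)
  have hpos := measure_pos_of_mem_suppM (hxμ 0)
    (closedBall_mem_nhds (x 0) (div_pos (dist_pos.2 h01) (by norm_num : (0 : ℝ) < 6)))
  exact hpos.ne' (measure_mono_null (hx.closedBall_subset_union hlim h01) hnull)

/-- For an atomless measure with coinciding maximal operators, there is no sequence in the
support in which each `x (n+2)` is a metric midpoint of `x n` and `x (n+1)`, with all
points distinct and converging to a support point. -/
theorem no_midpoint_sequence {X : Type*} [MetricSpace X] [MeasurableSpace X] [BorelSpace X]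
    (μ : Measure X) (hfin : ∀ (c : X) (r : ℝ), μ (closedBall c r) ≠ ∞)
    (hsupp : (suppM μ).Nonempty) (hatomless : ∀ p : X, μ {p} = 0)
    (hM : ∀ f : X → ℝ≥0∞, Measurable f →
      (∀ (c : X) (r : ℝ), (∫⁻ z in closedBall c r, f z ∂μ) ≠ ∞) →
      ∀ z ∈ suppM μ, Mc μ f z = Munc μ f z) :
    ¬ ∃ x : ℕ → X,
      (∀ n, x n ∈ suppM μ) ∧
      Function.Injective x ∧
      (∀ n, dist (x n) (x (n + 2)) = dist (x n) (x (n + 1)) / 2 ∧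
            dist (x (n + 1)) (x (n + 2)) = dist (x n) (x (n + 1)) / 2) ∧
      (∃ x0 ∈ suppM μ, Tendsto x atTop (nhds x0)) :=
  no_midpoint_sequence_general μ hfin hM
end

section
/- Under the hypothesis that for all x, y ∈ supp(μ), μ(B(y,d(x,y))) ≤ inf{μ(B) : B closed ball containing x and y}: if {x_n} ⊆ supp(μ) is a sequence with x_{n+2} a metric midpoint of x_n and x_{n+1} for all n ≥ 1 and all points distinct, then the balls B_n := B(x_{n+2}, d(x_{n+1}, x_{n+2})) form a nested decreasing sequence B_{n+1} ⊆ B_n with μ(B_n) constant in n. -/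
open MeasureTheory Metric ENNReal Filter

/-- Under the ball-measure inequality, the balls `B n = B(x (n+2), d(x (n+1), x (n+2)))`
built from a midpoint sequence are nested and have constant measure. -/
theorem nested_balls_constant_measure {X : Type*} [MetricSpace X] [MeasurableSpace X]
    [BorelSpace X]
    (μ : Measure X) (hfin : ∀ (c : X) (r : ℝ), μ (closedBall c r) ≠ ∞)
    (hsupp : (suppM μ).Nonempty)
    (hkey : ∀ x ∈ suppM μ, ∀ y ∈ suppM μ,
      μ (closedBall y (dist x y)) ≤
        ⨅ B ∈ {B : Set X | IsClosedBall B ∧ x ∈ B ∧ y ∈ B}, μ B)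
    (x : ℕ → X) (hx : ∀ n, x n ∈ suppM μ) (hinj : Function.Injective x)
    (hmid : ∀ n, dist (x n) (x (n + 2)) = dist (x n) (x (n + 1)) / 2 ∧
                 dist (x (n + 1)) (x (n + 2)) = dist (x n) (x (n + 1)) / 2) :
    (∀ n, closedBall (x (n + 3)) (dist (x (n + 2)) (x (n + 3))) ⊆
          closedBall (x (n + 2)) (dist (x (n + 1)) (x (n + 2)))) ∧
    (∀ m n, μ (closedBall (x (m + 2)) (dist (x (m + 1)) (x (m + 2)))) =
            μ (closedBall (x (n + 2)) (dist (x (n + 1)) (x (n + 2))))) := by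

  have hd : ∀ n : ℕ, 0 < dist (x (n + 1)) (x (n + 2)) := by
    intro n
    refine dist_pos.2 fun h => ?_
    have := hinj h
    omega
  have hnest : ∀ n, closedBall (x (n + 3)) (dist (x (n + 2)) (x (n + 3))) ⊆
      closedBall (x (n + 2)) (dist (x (n + 1)) (x (n + 2))) := by
    intro n z hz
    have h2 := (hmid (n + 1)).2
    simp only [Metric.mem_closedBall] at hz ⊢
    have htri := dist_triangle z (x (n + 3)) (x (n + 2))
    have hc : dist (x (n + 3)) (x (n + 2)) = dist (x (n + 2)) (x (n + 3)) := dist_comm _ _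
    -- note x (n+1+2) = x (n+3)
    have h2' : dist (x (n + 2)) (x (n + 3)) = dist (x (n + 1)) (x (n + 2)) / 2 := by
      have : n + 1 + 2 = n + 3 := by omega
      rw [this] at h2; exact h2
    linarith
  refine ⟨hnest, ?_⟩
  have hstep : ∀ n, μ (closedBall (x (n + 2)) (dist (x (n + 1)) (x (n + 2)))) =
      μ (closedBall (x (n + 3)) (dist (x (n + 2)) (x (n + 3)))) := by
    intro n
    refine le_antisymm ?_ (measure_mono (hnest n))
    have key := hkey (x (n + 1)) (hx _) (x (n + 2)) (hx _)
    refine key.trans ?_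
    refine iInf₂_le (closedBall (x (n + 3)) (dist (x (n + 2)) (x (n + 3)))) ?_
    have h1 := (hmid (n + 1)).1
    have h2 := (hmid (n + 1)).2
    have h31 : n + 1 + 2 = n + 3 := by omega
    rw [h31] at h1 h2
    have hrpos : 0 < dist (x (n + 2)) (x (n + 3)) := by
      rw [h2]; linarith [hd n]
    refine ⟨⟨x (n + 3), dist (x (n + 2)) (x (n + 3)), hrpos, rfl⟩, ?_, ?_⟩
    · simp only [Metric.mem_closedBall]
      rw [h1, h2]
    · simp only [Metric.mem_closedBall]
      rw [dist_comm]
  have hconst : ∀ n, μ (closedBall (x (n + 2)) (dist (x (n + 1)) (x (n + 2)))) =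
      μ (closedBall (x 2) (dist (x 1) (x 2))) := by
    intro n
    induction n with
    | zero => rfl
    | succ k ih =>
      rw [← ih, ← hstep k]
  intro m n
  rw [hconst m, hconst n]
end

section
/- For μ a Borel measure on a metric space X, x ≠ y points with y ∈ supp(μ), and f_δ = χ_{U(x,δ)\U(y,d(x,y))}/μ(U(x,δ)\U(y,d(x,y))) (assumed well-defined for small δ > 0), the centered maximal function satisfies M^c_μ f_δ(y) ≤ 1/μ(B(y,d(x,y))), and hence limsup_{δ→0} M^c_μ f_δ(y) ≤ 1/μ(B(y,d(x,y))). -/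
open MeasureTheory Metric ENNReal Filter

/-! The function `f = χ_S / μ(S)` has total integral at most `1`, so its average over any ball
`B(y, r)` is at most `1 / μ(B(y, r))`. If `S` misses the open ball `U(y, ρ)`, the balls with
`r < ρ` see none of `f`, while those with `r ≥ ρ` contain `B(y, ρ)`; hence every average is at
most `1 / μ(B(y, ρ))`. In `ℝ≥0∞` the bound `μ(S)⁻¹ * μ(S) ≤ 1` also holds when `μ(S)` is `0`
or `∞`, so the estimate holds for every `δ` and the limsup bound is immediate. -/

section Averages

variable {X : Type*} [MetricSpace X] [MeasurableSpace X] (μ : Measure X)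

theorem avg_eq_zero_of_eqOn_zero {f : X → ℝ≥0∞} {B : Set X} (hB : MeasurableSet B)
    (hf : Set.EqOn f 0 B) : avg μ f B = 0 := by
  simp [avg, setLIntegral_congr_fun hB hf]

theorem avg_indicator_inv_measure_le (S B : Set X) :
    avg μ (S.indicator fun _ => (μ S)⁻¹) B ≤ (μ B)⁻¹ := by
  unfold avg
  split_ifs
  · exact zero_le
  have hint : ∫⁻ z in B, S.indicator (fun _ => (μ S)⁻¹) z ∂μ ≤ 1 :=
    calc ∫⁻ z in B, S.indicator (fun _ => (μ S)⁻¹) z ∂μ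
        ≤ ∫⁻ z, S.indicator (fun _ => (μ S)⁻¹) z ∂μ := setLIntegral_le_lintegral _ _
      _ ≤ (μ S)⁻¹ * μ S := lintegral_indicator_const_le _ _
      _ ≤ 1 := ENNReal.inv_mul_le_one _
  simpa only [one_div] using ENNReal.div_le_div_right hint (μ B)

theorem Mc_indicator_inv_measure_le_of_disjoint_ball [OpensMeasurableSpace X] {S : Set X}
    {y : X} {ρ : ℝ} (hS : Disjoint S (ball y ρ)) :
    Mc μ (S.indicator fun _ => (μ S)⁻¹) y ≤ (μ (closedBall y ρ))⁻¹ := by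
  refine iSup₂_le fun r _ => ?_
  rcases lt_or_ge r ρ with hr | hr
  · have hvanish : Set.EqOn (S.indicator fun _ => (μ S)⁻¹) 0 (closedBall y r) := fun z hz =>
      Set.indicator_of_notMem (hS.notMem_of_mem_right (closedBall_subset_ball hr hz)) _
    rw [avg_eq_zero_of_eqOn_zero μ measurableSet_closedBall hvanish]
    exact zero_le
  · calc avg μ (S.indicator fun _ => (μ S)⁻¹) (closedBall y r)
        ≤ (μ (closedBall y r))⁻¹ := avg_indicator_inv_measure_le μ S _
      _ ≤ (μ (closedBall y ρ))⁻¹ :=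
        ENNReal.inv_le_inv' (measure_mono (closedBall_subset_closedBall hr))

end Averages

theorem centered_maximal_indicator_bound_general {X : Type*} [MetricSpace X] [MeasurableSpace X]
    [BorelSpace X]
    (μ : Measure X)
    (x y : X) :
    (∀ δ : ℝ, 0 < δ → μ (ball x δ \ ball y (dist x y)) ≠ 0 →
      Mc μ ((ball x δ \ ball y (dist x y)).indicator
        (fun _ => (μ (ball x δ \ ball y (dist x y)))⁻¹)) y ≤
        (μ (closedBall y (dist x y)))⁻¹) ∧
    limsup (fun δ : ℝ =>
        Mc μ ((ball x δ \ ball y (dist x y)).indicator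
          (fun _ => (μ (ball x δ \ ball y (dist x y)))⁻¹)) y)
      (nhdsWithin (0 : ℝ) (Set.Ioi 0)) ≤ (μ (closedBall y (dist x y)))⁻¹ := by
  have hbound : ∀ δ : ℝ, Mc μ ((ball x δ \ ball y (dist x y)).indicator
      (fun _ => (μ (ball x δ \ ball y (dist x y)))⁻¹)) y ≤ (μ (closedBall y (dist x y)))⁻¹ :=
    fun δ => Mc_indicator_inv_measure_le_of_disjoint_ball μ Set.disjoint_sdiff_left
  exact ⟨fun δ _ _ => hbound δ, limsup_le_of_le (by isBoundedDefault) (.of_forall hbound)⟩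

/-- The centered maximal function of the normalized indicator
`f_δ = χ_{U(x,δ) \ U(y,d(x,y))} / μ(U(x,δ) \ U(y,d(x,y)))` at `y` is bounded by
`1 / μ(B(y, d(x,y)))`, and hence so is its limsup as `δ → 0⁺`. -/
theorem centered_maximal_indicator_bound {X : Type*} [MetricSpace X] [MeasurableSpace X]
    [BorelSpace X]
    (μ : Measure X) (hfin : ∀ (c : X) (r : ℝ), μ (closedBall c r) ≠ ∞)
    (x y : X) (hxy : x ≠ y) (hy : y ∈ suppM μ)
    (hpos : ∀ᶠ δ in nhdsWithin (0 : ℝ) (Set.Ioi 0),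
      μ (ball x δ \ ball y (dist x y)) ≠ 0) :
    (∀ δ : ℝ, 0 < δ → μ (ball x δ \ ball y (dist x y)) ≠ 0 →
      Mc μ ((ball x δ \ ball y (dist x y)).indicator
        (fun _ => (μ (ball x δ \ ball y (dist x y)))⁻¹)) y ≤
        (μ (closedBall y (dist x y)))⁻¹) ∧
    limsup (fun δ : ℝ =>
        Mc μ ((ball x δ \ ball y (dist x y)).indicator
          (fun _ => (μ (ball x δ \ ball y (dist x y)))⁻¹)) y)
      (nhdsWithin (0 : ℝ) (Set.Ioi 0)) ≤ (μ (closedBall y (dist x y)))⁻¹ :=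
  centered_maximal_indicator_bound_general μ x y
end
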